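/- For all $\theta \in [0, \pi]$ and $1 \leq \tau_2 \leq \tau_1$, the inequality $2\operatorname{arth}\sqrt{\frac{\theta^2 + (\tau_1-\tau_2)^2}{\theta^2 + (\tau_1+\tau_2)^2}} \leq \frac{\theta}{\tau_1} + \log\tau_1 - \log\tau_2$ holds. -/

import Mathlib

/-!
Write `a = √(θ² + (τ₁ + τ₂)²)` and `b = √(θ² + (τ₁ - τ₂)²)`. Since `a² - b² = 4τ₁τ₂`, the left-hand
side equals `log ((a + b)² / (4τ₁τ₂))`, so the claim reduces to `a + b ≤ 2τ₁ exp (θ / (2τ₁))`.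
The sum of distances `a + b` from `(θ, τ₁)` to the foci `(0, ∓τ₂)` only grows as the foci move
apart to `(0, ∓τ₁)`, giving `a + b ≤ θ + √(θ² + 4τ₁²)`, and this is at most `2τ₁ exp (θ / (2τ₁))`
because `u + √(1 + u²) = exp (arsinh u) ≤ exp u` for `u ≥ 0`.
-/

open Real

/-- The inverse hyperbolic tangent, `arth t = (1/2) log ((1+t)/(1-t))`. -/
noncomputable def arth (t : ℝ) : ℝ := Real.log ((1 + t) / (1 - t)) / 2

lemma two_mul_arth_sqrt_div {A B : ℝ} (hB : 0 ≤ B) (hBA : B < A) :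
    2 * arth √(B / A) = log ((√A + √B) ^ 2 / (A - B)) := by
  have hba : √B < √A := sqrt_lt_sqrt hB hBA
  have hAB : A - B = (√A - √B) * (√A + √B) := by
    rw [mul_comm, ← sq_sub_sq, sq_sqrt (hB.trans hBA.le), sq_sqrt hB]
  have ha : 0 < √A := (sqrt_nonneg B).trans_lt hba
  rw [arth, sqrt_div hB, hAB, one_add_div ha.ne', one_sub_div ha.ne',
    div_div_div_cancel_right₀ ha.ne']
  field_simp

lemma Real.arsinh_le_self {u : ℝ} (hu : 0 ≤ u) : arsinh u ≤ u := by
  rwa [← sinh_le_sinh, sinh_arsinh, self_le_sinh_iff]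

lemma add_sqrt_one_add_sq_le_exp {u : ℝ} (hu : 0 ≤ u) : u + √(1 + u ^ 2) ≤ exp u :=
  exp_arsinh u ▸ exp_le_exp.2 (arsinh_le_self hu)

lemma add_sqrt_sq_add_sq_le_mul_exp {x s : ℝ} (hx : 0 ≤ x) (hs : 0 < s) :
    x + √(x ^ 2 + s ^ 2) ≤ s * exp (x / s) := by
  have hscale : x + √(x ^ 2 + s ^ 2) = s * (x / s + √(1 + (x / s) ^ 2)) := by
    rw [mul_add, mul_div_cancel₀ _ hs.ne', ← sqrt_sq hs.le, ← sqrt_mul (sq_nonneg s), sqrt_sq hs.le]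
    congr 2
    field_simp
    ring
  rw [hscale]
  exact mul_le_mul_of_nonneg_left (add_sqrt_one_add_sq_le_exp (div_nonneg hx hs.le)) hs.le

lemma sqrt_add_sqrt_le_add_sqrt {x s t : ℝ} (hx : 0 ≤ x) (hst : s ^ 2 ≤ t ^ 2) :
    √(x ^ 2 + (t + s) ^ 2) + √(x ^ 2 + (t - s) ^ 2) ≤ x + √(x ^ 2 + (2 * t) ^ 2) := by
  set a := √(x ^ 2 + (t + s) ^ 2)
  set b := √(x ^ 2 + (t - s) ^ 2)
  set c := √(x ^ 2 + (2 * t) ^ 2)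
  have ha : a ^ 2 = x ^ 2 + (t + s) ^ 2 := sq_sqrt (by positivity)
  have hb : b ^ 2 = x ^ 2 + (t - s) ^ 2 := sq_sqrt (by positivity)
  have hc : c ^ 2 = x ^ 2 + (2 * t) ^ 2 := sq_sqrt (by positivity)
  have hc0 : 0 ≤ c := sqrt_nonneg _
  have hxc : 0 ≤ x * c := mul_nonneg hx hc0
  -- squaring twice: `(t² - s² + x c)² - a² b² = 2 x (t² - s²) (x + c) ≥ 0`
  have hab : a * b ≤ t ^ 2 - s ^ 2 + x * c := by
    refine abs_le_of_sq_le_sq' ?_ (by linarith) |>.2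
    nlinarith [mul_nonneg (mul_nonneg hx (sub_nonneg.2 hst)) (add_nonneg hx hc0)]
  refine abs_le_of_sq_le_sq' ?_ (add_nonneg hx hc0) |>.2
  nlinarith

theorem stmt_7_general (θ τ₁ τ₂ : ℝ) (hθ0 : 0 ≤ θ) (hτ₂ : 1 ≤ τ₂) (h21 : τ₂ ≤ τ₁) :
    2 * arth (Real.sqrt ((θ ^ 2 + (τ₁ - τ₂) ^ 2) / (θ ^ 2 + (τ₁ + τ₂) ^ 2)))
      ≤ θ / τ₁ + Real.log τ₁ - Real.log τ₂ := by
  have hτ₂0 : 0 < τ₂ := one_pos.trans_le hτ₂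
  have hτ₁0 : 0 < τ₁ := hτ₂0.trans_le h21
  have hsum : √(θ ^ 2 + (τ₁ + τ₂) ^ 2) + √(θ ^ 2 + (τ₁ - τ₂) ^ 2) ≤
      2 * τ₁ * exp (θ / (2 * τ₁)) :=
    (sqrt_add_sqrt_le_add_sqrt hθ0 (by nlinarith)).trans
      (add_sqrt_sq_add_sq_le_mul_exp hθ0 (by positivity))
  have hdiff : θ ^ 2 + (τ₁ + τ₂) ^ 2 - (θ ^ 2 + (τ₁ - τ₂) ^ 2) = 4 * τ₁ * τ₂ := by ring
  have hexp : (2 * τ₁ * exp (θ / (2 * τ₁))) ^ 2 / (4 * τ₁ * τ₂) = τ₁ / τ₂ * exp (θ / τ₁) := by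
    rw [mul_pow, ← exp_nat_mul]
    field_simp
    ring_nf
  rw [two_mul_arth_sqrt_div (by positivity) (by nlinarith), hdiff]
  calc _ ≤ log ((2 * τ₁ * exp (θ / (2 * τ₁))) ^ 2 / (4 * τ₁ * τ₂)) := by gcongr
    _ = θ / τ₁ + log τ₁ - log τ₂ := by
        rw [hexp, log_mul (by positivity) (exp_ne_zero _), log_div hτ₁0.ne' hτ₂0.ne', log_exp]
        ring

theorem stmt_7 (θ τ₁ τ₂ : ℝ) (hθ0 : 0 ≤ θ) (hθπ : θ ≤ π) (hτ₂ : 1 ≤ τ₂) (h21 : τ₂ ≤ τ₁) :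
    2 * arth (Real.sqrt ((θ ^ 2 + (τ₁ - τ₂) ^ 2) / (θ ^ 2 + (τ₁ + τ₂) ^ 2)))
      ≤ θ / τ₁ + Real.log τ₁ - Real.log τ₂ :=
  stmt_7_general θ τ₁ τ₂ hθ0 hτ₂ h21
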